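/- arXiv:2301.10435 — 2 statements merged into one kernel-verified Lean document; each statement's English description precedes it below -/
import Mathlib

section
/- Suppose the weaker user's large-system SINR at uniform intra-pair power split is at least the stronger user's, i.e., γ_w(1) ≥ γ_s(1). Then for every a ∈ (0,1], min{γ_s(a), γ_w(a)} ≤ γ_s(1) = ζ(1−M̄)(1−β)/(2K̄(β+η)). In other words, the power decay factor α = 0 (equivalently a = c^{2α} = 1) maximizes the pair's minimum SINR over all α ≥ 0, and the optimal value is ζ(1−M̄)(1−β)/(2K̄(β+η)). -/
/-- Boundary case of Proposition 1: if the weaker user's large-system SINR at the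
uniform intra-pair power split (`a = 1`, i.e. `α = 0`) is at least the stronger user's,
then `a = 1` maximizes `min (γs a) (γw a)` over `a ∈ (0,1]`, and the optimal value is
`ζ(1−M̄)(1−β)/(2K̄(β+η))`. -/
theorem stmt_0 (ζ β Mbar Kbar η c ρ : ℝ)
    (hζ : 0 < ζ) (hβ0 : 0 < β) (hβ1 : β < 1)
    (hM0 : 0 < Mbar) (hM1 : Mbar < 1) (hK : 0 < Kbar) (hη : 0 < η)
    (hc0 : 0 < c) (hc1 : c < 1) (hρ0 : 0 < ρ) (hρ1 : ρ ≤ 1)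
    (γs γw : ℝ → ℝ)
    (hγs : ∀ a, γs a = ζ * a * (1 - Mbar) * (1 - β) / (Kbar * (1 + a) * (β + η)))
    (hγw : ∀ a, γw a = ζ * (1 - Mbar) * (1 - β) /
      (Kbar * (1 + a) * (c ^ 2 - c ^ 2 * ρ ^ 2 * (1 - β) + η) +
        ζ * a ^ 2 * (1 - Mbar) * (1 - β)))
    (h : γs 1 ≤ γw 1) :
    (∀ a, 0 < a → a ≤ 1 → min (γs a) (γw a) ≤ γs 1) ∧
      γs 1 = ζ * (1 - Mbar) * (1 - β) / (2 * Kbar * (β + η)) := by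
  constructor
  · intro a ha ha1
    refine le_trans (min_le_left _ _) ?_
    rw [hγs a, hγs 1]
    rw [div_le_div_iff₀ (by positivity) (by positivity)]
    nlinarith [mul_pos (mul_pos hζ (sub_pos.2 hM1)) (sub_pos.2 hβ1),
      mul_pos hK (add_pos hβ0 hη), sub_nonneg.2 ha1,
      mul_nonneg (mul_nonneg (mul_nonneg hζ.le (sub_pos.2 hM1).le) (sub_pos.2 hβ1).le)
        (mul_nonneg (mul_nonneg hK.le (add_pos hβ0 hη).le) (sub_nonneg.2 ha1))]
  · rw [hγs 1]; ring_nf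
end

section
/- Suppose the weaker user's large-system SINR at uniform intra-pair power split is strictly less than the stronger user's, i.e., γ_w(1) < γ_s(1). Then there exists a unique a* ∈ (0,1) with γ_s(a*) = γ_w(a*), and for every a ∈ (0,1], min{γ_s(a), γ_w(a)} ≤ γ_s(a*), with equality if and only if a = a*. Consequently the optimal power decay factor α* = ln(a*)/ln(c²) is strictly positive, and at the optimum both users of the pair achieve the same SINR γ_s(a*) = γ_w(a*). -/
/-- Interior case of Proposition 1: if the weaker user's large-system SINR at the
uniform power split is strictly below the stronger user's, there is a unique
`a* ∈ (0,1)` where the two SINR curves intersect; it is the unique maximizer of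
`min (γs a) (γw a)` over `a ∈ (0,1]`, both users achieve the same SINR there, and
the corresponding power decay factor `α* = ln a* / ln (c²)` is strictly positive. -/
theorem stmt_1 (ζ β Mbar Kbar η c ρ : ℝ)
    (hζ : 0 < ζ) (hβ0 : 0 < β) (hβ1 : β < 1)
    (hM0 : 0 < Mbar) (hM1 : Mbar < 1) (hK : 0 < Kbar) (hη : 0 < η)
    (hc0 : 0 < c) (hc1 : c < 1) (hρ0 : 0 < ρ) (hρ1 : ρ ≤ 1)
    (γs γw : ℝ → ℝ)
    (hγs : ∀ a, γs a = ζ * a * (1 - Mbar) * (1 - β) / (Kbar * (1 + a) * (β + η)))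
    (hγw : ∀ a, γw a = ζ * (1 - Mbar) * (1 - β) /
      (Kbar * (1 + a) * (c ^ 2 - c ^ 2 * ρ ^ 2 * (1 - β) + η) +
        ζ * a ^ 2 * (1 - Mbar) * (1 - β)))
    (h : γw 1 < γs 1) :
    ∃ astar : ℝ, 0 < astar ∧ astar < 1 ∧ γs astar = γw astar ∧
      (∀ a, 0 < a → a < 1 → γs a = γw a → a = astar) ∧
      (∀ a, 0 < a → a ≤ 1 →
        min (γs a) (γw a) ≤ γs astar ∧ (min (γs a) (γw a) = γs astar ↔ a = astar)) ∧
      0 < Real.log astar / Real.log (c ^ 2) := by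
  have hM : 0 < 1 - Mbar := by linarith
  have hB : 0 < 1 - β := by linarith
  have hP : 0 < ζ * (1 - Mbar) * (1 - β) := by positivity
  have hρ2 : ρ ^ 2 ≤ 1 := by nlinarith
  have hE : 0 < c ^ 2 - c ^ 2 * ρ ^ 2 * (1 - β) + η := by
    nlinarith [mul_nonneg (mul_nonneg (sq_nonneg c) hB.le) (sub_nonneg.2 hρ2),
      mul_nonneg (sq_nonneg c) hβ0.le]
  have hD : 0 < β + η := by linarith
  -- denominator positivity
  have hd1 : ∀ a : ℝ, 0 ≤ a → 0 < Kbar * (1 + a) * (β + η) := by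
    intro a ha; have : 0 < 1 + a := by linarith
    positivity
  have hd2 : ∀ a : ℝ, 0 ≤ a →
      0 < Kbar * (1 + a) * (c ^ 2 - c ^ 2 * ρ ^ 2 * (1 - β) + η) +
        ζ * a ^ 2 * (1 - Mbar) * (1 - β) := by
    intro a ha
    have h1 : 0 < Kbar * (1 + a) * (c ^ 2 - c ^ 2 * ρ ^ 2 * (1 - β) + η) := by
      have : 0 < 1 + a := by linarith
      exact mul_pos (mul_pos hK this) hE
    have h2 : 0 ≤ ζ * a ^ 2 * (1 - Mbar) * (1 - β) := by positivity
    linarith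
  -- strict monotonicity of γs
  have hs_mono : ∀ a b : ℝ, 0 ≤ a → a < b → γs a < γs b := by
    intro a b ha hab
    rw [hγs, hγs]
    rw [div_lt_div_iff₀ (hd1 a ha) (hd1 b (by linarith))]
    have hb : 0 ≤ b := by linarith
    nlinarith [mul_pos hP hK, mul_pos (mul_pos hP hK) hD]
  -- strict antitonicity of γw
  have hw_mono : ∀ a b : ℝ, 0 ≤ a → a < b → γw b < γw a := by
    intro a b ha hab
    rw [hγw, hγw]
    apply div_lt_div_of_pos_left hP (hd2 a ha)
    have h1 : 0 < Kbar * (c ^ 2 - c ^ 2 * ρ ^ 2 * (1 - β) + η) * (b - a) :=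
      mul_pos (mul_pos hK hE) (by linarith)
    have h2 : 0 ≤ ζ * (1 - Mbar) * (1 - β) * ((b - a) * (b + a)) :=
      mul_nonneg hP.le (mul_nonneg (by linarith) (by linarith))
    nlinarith [h1, h2]
  -- strict monotonicity of the difference
  have hfmono : ∀ a b : ℝ, 0 ≤ a → a < b → γs a - γw a < γs b - γw b := by
    intro a b ha hab
    have := hs_mono a b ha hab
    have := hw_mono a b ha hab
    linarith
  -- the explicit difference function
  set F : ℝ → ℝ := fun a =>
    ζ * a * (1 - Mbar) * (1 - β) / (Kbar * (1 + a) * (β + η)) -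
      ζ * (1 - Mbar) * (1 - β) /
        (Kbar * (1 + a) * (c ^ 2 - c ^ 2 * ρ ^ 2 * (1 - β) + η) +
          ζ * a ^ 2 * (1 - Mbar) * (1 - β)) with hFdef
  have hF : ∀ a, F a = γs a - γw a := by
    intro a; rw [hγs, hγw]
  have hcont : ContinuousOn F (Set.Icc (0:ℝ) 1) := by
    apply ContinuousOn.sub
    · apply ContinuousOn.div
      · fun_prop
      · fun_prop
      · intro x hx; exact ne_of_gt (hd1 x hx.1)
    · apply ContinuousOn.div
      · fun_prop
      · fun_prop
      · intro x hx; exact ne_of_gt (hd2 x hx.1)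
  have hF0 : F 0 < 0 := by
    rw [hF]
    have hs0 : γs 0 = 0 := by rw [hγs]; simp
    have hw0 : 0 < γw 0 := by
      rw [hγw]; exact div_pos hP (hd2 0 le_rfl)
    linarith
  have hF1 : 0 < F 1 := by
    rw [hF]; linarith
  obtain ⟨astar, haI, hFa⟩ :=
    intermediate_value_Ioo (by norm_num : (0:ℝ) ≤ 1) hcont ⟨hF0, hF1⟩
  obtain ⟨ha0, ha1⟩ := haI
  have hroot : γs astar = γw astar := by
    have := hF astar
    rw [hFa] at this
    linarith
  refine ⟨astar, ha0, ha1, hroot, ?_, ?_, ?_⟩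
  · intro a ha hA heq
    rcases lt_trichotomy a astar with hlt | heq' | hgt
    · have := hfmono a astar (le_of_lt ha) hlt
      linarith
    · exact heq'
    · have := hfmono astar a (le_of_lt ha0) hgt
      linarith
  · intro a ha ha1'
    rcases lt_trichotomy a astar with hlt | heq' | hgt
    · have hdiff := hfmono a astar (le_of_lt ha) hlt
      have hsa : γs a < γw a := by linarith
      have hmin : min (γs a) (γw a) = γs a := min_eq_left (le_of_lt hsa)
      have hss := hs_mono a astar (le_of_lt ha) hlt
      constructor
      · rw [hmin]; linarith
      · constructor
        · intro hmeq; rw [hmin] at hmeq; linarith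
        · intro hae; exfalso; rw [hae] at hlt; exact lt_irrefl _ hlt
    · subst heq'
      have hmin : min (γs a) (γw a) = γs a := by rw [hroot, min_self]
      exact ⟨le_of_eq hmin, by simp [hmin]⟩
    · have hdiff := hfmono astar a (le_of_lt ha0) hgt
      have hsa : γw a < γs a := by linarith
      have hmin : min (γs a) (γw a) = γw a := min_eq_right (le_of_lt hsa)
      have hww := hw_mono astar a (le_of_lt ha0) hgt
      constructor
      · rw [hmin]; linarith
      · constructor
        · intro hmeq; rw [hmin] at hmeq; linarith
        · intro hae; exfalso; rw [hae] at hgt; exact lt_irrefl _ hgt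
  · have hl1 : Real.log astar < 0 := Real.log_neg ha0 ha1
    have hc2 : c ^ 2 < 1 := by nlinarith
    have hl2 : Real.log (c ^ 2) < 0 := Real.log_neg (by positivity) hc2
    exact div_pos_of_neg_of_neg hl1 hl2
end
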